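/- For any equivariant sheaf (r : R → X_T, ρ) on the topological groupoid G_T ⇉ X_T, the projection π₂ : G_T ×_{X_T} R → R, ((M,N,f), x) ↦ x, is an open map. -/

import Mathlib

open FirstOrder FirstOrder.Language Set Topology

universe u v w x

variable {L : FirstOrder.Language.{u, v}} {α : Type w}

/-- A model of `T` whose carrier is a subset of `α`: an element of the set `X_T` of
small models of `T`. -/
structure SmallModel (L : FirstOrder.Language.{u, v}) (α : Type w) (T : L.Theory) where
  carrier : Set α
  struc : L.Structure carrier
  models : @FirstOrder.Language.Theory.Model L carrier struc T

/-- `M.Sat φ v` means that the formula `φ` is realized in the small model `M`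
at the valuation `v`. -/
def SmallModel.Sat {T : L.Theory} (M : SmallModel L α T) {ι : Type*}
    (φ : L.Formula ι) (v : ι → M.carrier) : Prop :=
  letI := M.struc
  φ.Realize v

/-- The basic open set `⟨φ, b⟩ ⊆ X_T`. -/
def XBasic {T : L.Theory} {n : ℕ} (φ : L.Formula (Fin n)) (b : Fin n → α) :
    Set (SmallModel L α T) :=
  {M | ∃ h : ∀ i, b i ∈ M.carrier, M.Sat φ fun i => ⟨b i, h i⟩}

/-- The logical topology on `X_T`, generated by the sets `⟨φ, b⟩`. -/
instance SmallModel.instTopologicalSpace {T : L.Theory} :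
    TopologicalSpace (SmallModel L α T) :=
  TopologicalSpace.generateFrom
    {U | ∃ (n : ℕ) (φ : L.Formula (Fin n)) (b : Fin n → α), U = XBasic φ b}

/-- Isomorphisms of `L`-structures between two small models. -/
abbrev StrEquiv {T : L.Theory} (A B : SmallModel L α T) : Type _ :=
  @FirstOrder.Language.Equiv L A.carrier B.carrier A.struc B.struc

/-- The underlying function of an isomorphism of small models. -/
def StrEquiv.fn {T : L.Theory} {A B : SmallModel L α T} (f : StrEquiv A B) :
    A.carrier → B.carrier :=
  (@FirstOrder.Language.Equiv.toEquiv L A.carrier B.carrier A.struc B.struc f)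

/-- Composition of isomorphisms of small models. -/
def StrEquiv.comp {T : L.Theory} {A B C : SmallModel L α T}
    (g : StrEquiv B C) (f : StrEquiv A B) : StrEquiv A C :=
  letI := A.struc; letI := B.struc; letI := C.struc
  FirstOrder.Language.Equiv.comp g f

/-- An element of `G_T`: a triple `(M, N, f)` with `M, N ∈ X_T` and `f : M ≅ N` an
isomorphism of `L`-structures. -/
structure ModelIso (L : FirstOrder.Language.{u, v}) (α : Type w) (T : L.Theory) where
  src : SmallModel L α T
  tgt : SmallModel L α T
  iso : StrEquiv src tgt

/-- The basic open set `⟨a ↦ b⟩ ⊆ G_T`. -/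
def GMapsTo {T : L.Theory} (a b : α) : Set (ModelIso L α T) :=
  {g | ∃ h : a ∈ g.src.carrier, (StrEquiv.fn g.iso ⟨a, h⟩ : α) = b}

/-- The logical topology on `G_T`, generated by the sets `s⁻¹⟨φ, b⟩`, `t⁻¹⟨φ, b⟩` and
`⟨a ↦ b⟩`. -/
instance ModelIso.instTopologicalSpace {T : L.Theory} :
    TopologicalSpace (ModelIso L α T) :=
  TopologicalSpace.generateFrom
    ({U | ∃ (n : ℕ) (φ : L.Formula (Fin n)) (b : Fin n → α),
        U = ModelIso.src ⁻¹' XBasic φ b} ∪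
     {U | ∃ (n : ℕ) (φ : L.Formula (Fin n)) (b : Fin n → α),
        U = ModelIso.tgt ⁻¹' XBasic φ b} ∪
     {U | ∃ a b : α, U = GMapsTo (T := T) a b})

/-- The identity arrow of `G_T` at a model `M`. -/
def ModelIso.idIso {T : L.Theory} (M : SmallModel L α T) : ModelIso L α T :=
  ⟨M, M, letI := M.struc; FirstOrder.Language.Equiv.refl L M.carrier⟩

/-- The inverse of an arrow of `G_T`. -/
def ModelIso.invIso {T : L.Theory} (g : ModelIso L α T) : ModelIso L α T :=
  ⟨g.tgt, g.src, letI := g.src.struc; letI := g.tgt.struc;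
    FirstOrder.Language.Equiv.symm g.iso⟩

/-- An equivariant sheaf `(r : R → X_T, ρ)` on the topological groupoid `G_T ⇉ X_T`:
a local homeomorphism `r` into `X_T` together with a continuous action `ρ` of `G_T`. -/
structure EquivSheaf (L : FirstOrder.Language.{u, v}) (α : Type w) (T : L.Theory) where
  /-- The total space. -/
  R : Type x
  [topR : TopologicalSpace R]
  /-- The projection to the space of models. -/
  r : R → SmallModel L α T
  isLocalHomeomorph_r : IsLocalHomeomorph r
  /-- The action `ρ : G_T ×_{X_T} R → R`, defined on the set of pairs `((M,N,f), z)`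
  with `r z = M`, topologized as a subspace of the product. -/
  act : {q : ModelIso L α T × R // r q.2 = q.1.src} → R
  continuous_act : Continuous act
  r_act : ∀ q, r (act q) = q.1.1.tgt
  act_id : ∀ z : R, act ⟨(ModelIso.idIso (r z), z), rfl⟩ = z
  act_comp : ∀ (A B C : SmallModel L α T) (f : StrEquiv A B) (g : StrEquiv B C)
      (z : R) (hz : r z = A),
    act ⟨((⟨B, C, g⟩ : ModelIso L α T),
          act ⟨((⟨A, B, f⟩ : ModelIso L α T), z), hz⟩), r_act _⟩ =
      act ⟨((⟨A, C, StrEquiv.comp g f⟩ : ModelIso L α T), z), hz⟩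

attribute [instance] EquivSheaf.topR

/-! The source map `s : G_T → X_T` is open. Every neighbourhood of an arrow `g₀` contains the
arrows whose source is near `g₀.src` and which agree with `g₀` on a finite set `t`; a subbasic
condition `tgt⁻¹⟨ψ, c⟩` reduces to this form by pulling `⟨ψ, c⟩` back along `g₀`. Conversely every
model `M` near `g₀.src` that contains `t` is the source of such an arrow: extend `g₀` restricted
to `t` to a permutation `π` of `α` and transport the structure of `M` along `π`.
Since `G_T ×_{X_T} R` is a fibre product over the open map `s` and the continuous map `r`,
the projection `π₂` is open. -/

open Filter Function Topology

theorem IsOpenMap.pullback_snd {X Y Z : Type*} [TopologicalSpace X]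
    [TopologicalSpace Y] [TopologicalSpace Z] {f : X → Z} {g : Y → Z}
    (hf : IsOpenMap f) (hg : Continuous g) :
    IsOpenMap (fun q : {q : X × Y // g q.2 = f q.1} => q.1.2) := by
  refine IsOpenMap.of_nhds_le fun q => le_map fun s hs => ?_
  rw [nhds_induced, mem_comap] at hs
  obtain ⟨W, hW, hWs⟩ := hs
  obtain ⟨U, hU, V, hV, hUV⟩ := mem_nhds_prod_iff.1 hW
  have hfU : g ⁻¹' (f '' U) ∈ 𝓝 q.1.2 :=
    hg.continuousAt.preimage_mem_nhds (q.2 ▸ hf.image_mem_nhds hU)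
  refine mem_of_superset (inter_mem hV hfU) ?_
  rintro y ⟨hyV, x, hxU, hxy⟩
  exact ⟨⟨(x, y), hxy.symm⟩, hWs (hUV ⟨hxU, hyV⟩), rfl⟩

theorem Equiv.Perm.exists_apply_eq_of_injective {α ι : Type*} [Finite ι] {i f : ι → α}
    (hi : Injective i) (hf : Injective f) : ∃ π : Equiv.Perm α, ∀ k, π (i k) = f k := by
  classical
  have : Finite {x | x ∈ range i} := (finite_range i).to_subtype
  let e := (Equiv.ofInjective i hi).symm.trans (Equiv.ofInjective f hf)
  refine ⟨e.extendSubtype, fun k => ?_⟩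
  rw [e.extendSubtype_apply_of_mem _ ⟨k, rfl⟩]
  simp [e]

section

variable {T : L.Theory}

theorem isOpen_xBasic {n : ℕ} (φ : L.Formula (Fin n)) (b : Fin n → α) :
    IsOpen (XBasic (T := T) φ b) :=
  .basic _ ⟨n, φ, b, rfl⟩

theorem SmallModel.isOpen_setOf_mem_carrier (a : α) :
    IsOpen {M : SmallModel L α T | a ∈ M.carrier} := by
  convert isOpen_xBasic (T := T) (⊤ : L.Formula (Fin 1)) (fun _ => a) using 1
  ext M
  let := M.struc
  exact ⟨fun ha => ⟨fun _ => ha, Formula.realize_top.2 trivial⟩, fun ⟨h, _⟩ => h 0⟩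

theorem SmallModel.sat_iff_of_strEquiv {A B : SmallModel L α T} (f : StrEquiv A B) {ι : Type*}
    (φ : L.Formula ι) (v : ι → A.carrier) :
    A.Sat φ v ↔ B.Sat φ (StrEquiv.fn f ∘ v) := by
  let := A.struc; let := B.struc
  exact (StrongHomClass.realize_formula f φ).symm

theorem SmallModel.exists_modelIso_src_eq (M : SmallModel L α T) (π : Equiv.Perm α) :
    ∃ g : ModelIso L α T, g.src = M ∧
      ∀ (y : α) (hy : y ∈ g.src.carrier), (StrEquiv.fn g.iso ⟨y, hy⟩ : α) = π y := by
  let := M.struc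
  have := M.models
  let e := Equiv.image π M.carrier
  let : L.Structure (π '' M.carrier) := e.inducedStructure
  exact ⟨⟨M, ⟨π '' M.carrier, _, StrongHomClass.theory_model e.inducedStructureEquiv⟩,
    e.inducedStructureEquiv⟩, rfl, fun _ _ => rfl⟩

namespace ModelIso

theorem mem_gMapsTo_of_invIso_mem {g : ModelIso L α T} {a b : α}
    (h : g.invIso ∈ GMapsTo b a) : g ∈ GMapsTo a b := by
  obtain ⟨hb, hba⟩ := h
  let := g.src.struc; let := g.tgt.struc
  refine ⟨hba ▸ Subtype.prop _, ?_⟩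
  subst hba
  exact congrArg Subtype.val (g.iso.toEquiv.apply_symm_apply ⟨b, hb⟩)

theorem tgt_mem_xBasic {g : ModelIso L α T} {n : ℕ} {φ : L.Formula (Fin n)} {b c : Fin n → α}
    (hsrc : g.src ∈ XBasic φ b) (hmaps : ∀ i, g ∈ GMapsTo (b i) (c i)) :
    g.tgt ∈ XBasic φ c := by
  obtain ⟨hb, hsat⟩ := hsrc
  have hfn : ∀ i, (StrEquiv.fn g.iso ⟨b i, hb i⟩ : α) = c i := fun i => (hmaps i).2
  refine ⟨fun i => hfn i ▸ Subtype.prop _, ?_⟩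
  convert (SmallModel.sat_iff_of_strEquiv g.iso φ _).1 hsat with i
  exact (hfn i).symm

def agreementFilter (g₀ : ModelIso L α T) : Filter (ModelIso L α T) :=
  comap src (𝓝 g₀.src) ⊓ ⨅ y : g₀.src.carrier, 𝓟 (GMapsTo y (StrEquiv.fn g₀.iso y))

variable {g₀ : ModelIso L α T}

theorem hasBasis_agreementFilter (g₀ : ModelIso L α T) :
    g₀.agreementFilter.HasBasis
      (fun p : Set (SmallModel L α T) × Set g₀.src.carrier => p.1 ∈ 𝓝 g₀.src ∧ p.2.Finite)
      (fun p => src ⁻¹' p.1 ∩ ⋂ y ∈ p.2, GMapsTo y (StrEquiv.fn g₀.iso y)) :=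
  ((𝓝 g₀.src).basis_sets.comap src).inf (hasBasis_iInf_principal_finite _)

theorem preimage_src_mem_agreementFilter {V : Set (SmallModel L α T)} (hV : V ∈ 𝓝 g₀.src) :
    src ⁻¹' V ∈ g₀.agreementFilter :=
  mem_inf_of_left (preimage_mem_comap hV)

theorem gMapsTo_mem_agreementFilter {a b : α} (h : g₀ ∈ GMapsTo a b) :
    GMapsTo a b ∈ g₀.agreementFilter := by
  obtain ⟨ha, rfl⟩ := h
  exact mem_inf_of_right (mem_iInf_of_mem ⟨a, ha⟩ (mem_principal_self _))

theorem preimage_tgt_xBasic_mem_agreementFilter {n : ℕ} {ψ : L.Formula (Fin n)} {c : Fin n → α}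
    (h : g₀.tgt ∈ XBasic ψ c) : tgt ⁻¹' XBasic ψ c ∈ g₀.agreementFilter := by
  have hc := h.1
  let b i : α := StrEquiv.fn g₀.invIso.iso ⟨c i, hc i⟩
  have hinv : ∀ i, g₀.invIso ∈ GMapsTo (c i) (b i) := fun i => ⟨hc i, rfl⟩
  have hsrc : g₀.src ∈ XBasic ψ b := tgt_mem_xBasic h hinv
  refine mem_of_superset (inter_mem (preimage_src_mem_agreementFilter
      ((isOpen_xBasic ψ b).mem_nhds hsrc))
    (iInter_mem.2 fun i =>
      gMapsTo_mem_agreementFilter (mem_gMapsTo_of_invIso_mem (hinv i)))) ?_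
  exact fun g hg => tgt_mem_xBasic hg.1 (mem_iInter.1 hg.2)

theorem agreementFilter_le_nhds (g₀ : ModelIso L α T) : g₀.agreementFilter ≤ 𝓝 g₀ := by
  rw [TopologicalSpace.nhds_generateFrom]
  refine le_iInf₂ fun U ⟨hg₀U, hU⟩ => le_principal_iff.2 ?_
  rcases hU with (⟨n, φ, b, rfl⟩ | ⟨n, ψ, c, rfl⟩) | ⟨a, b, rfl⟩
  · exact preimage_src_mem_agreementFilter ((isOpen_xBasic φ b).mem_nhds hg₀U)
  · exact preimage_tgt_xBasic_mem_agreementFilter hg₀U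
  · exact gMapsTo_mem_agreementFilter hg₀U

theorem mem_image_src_of_subset_carrier {t : Set g₀.src.carrier} (ht : t.Finite)
    {M : SmallModel L α T} (hM : ∀ y ∈ t, (y : α) ∈ M.carrier) :
    M ∈ src '' ⋂ y ∈ t, GMapsTo (y : α) (StrEquiv.fn g₀.iso y : α) := by
  have := ht.to_subtype
  let := g₀.src.struc; let := g₀.tgt.struc
  obtain ⟨π, hπ⟩ := Equiv.Perm.exists_apply_eq_of_injective (i := fun y : t => (y : α))
    (f := fun y : t => (StrEquiv.fn g₀.iso y : α))
    (Subtype.val_injective.comp Subtype.val_injective)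
    (Subtype.val_injective.comp (g₀.iso.toEquiv.injective.comp Subtype.val_injective))
  obtain ⟨g, rfl, hg⟩ := M.exists_modelIso_src_eq π
  exact ⟨g, mem_iInter₂.2 fun y hy => ⟨hM y hy, (hg y (hM y hy)).trans (hπ ⟨y, hy⟩)⟩, rfl⟩

theorem nhds_src_le_map_nhds (g₀ : ModelIso L α T) : 𝓝 g₀.src ≤ map src (𝓝 g₀) := by
  refine le_trans ?_ (map_mono g₀.agreementFilter_le_nhds)
  refine (g₀.hasBasis_agreementFilter.map src).ge_iff.2 fun ⟨V, t⟩ ⟨hV, ht⟩ => ?_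
  have hcarrier : {M : SmallModel L α T | ∀ y ∈ t, (y : α) ∈ M.carrier} ∈ 𝓝 g₀.src :=
    ht.eventually_all.2 fun y _ => (SmallModel.isOpen_setOf_mem_carrier _).mem_nhds y.2
  refine mem_of_superset (inter_mem hV hcarrier) fun M ⟨hMV, hM⟩ => ?_
  obtain ⟨g, hg, rfl⟩ := mem_image_src_of_subset_carrier ht hM
  exact ⟨g, ⟨hMV, hg⟩, rfl⟩

theorem isOpenMap_src : IsOpenMap (src : ModelIso L α T → SmallModel L α T) :=
  .of_nhds_le nhds_src_le_map_nhds

end ModelIso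

end

/-- **The second projection of an equivariant sheaf is open**: for any equivariant sheaf
`(r : R → X_T, ρ)` on `G_T ⇉ X_T`, the projection `π₂ : G_T ×_{X_T} R → R` is an open
map. -/
theorem equivSheaf_pi2_isOpenMap {T : L.Theory} (E : EquivSheaf.{u, v, w, x} L α T) :
    IsOpenMap (fun q : {q : ModelIso L α T × E.R // E.r q.2 = q.1.src} => q.1.2) :=
  ModelIso.isOpenMap_src.pullback_snd E.isLocalHomeomorph_r.continuous
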